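/- The Whitehead link holonomy generators satisfy: G₁ and G₃ have trace 2+i and are loxodromic (they have an eigenvalue of modulus ≠ 1), while G₂ and G₄ have trace -1-2i and satisfy G₂⁴ = identity and G₄⁴ = identity in PU(2,1) (i.e., their fourth powers are scalar matrices). -/

import Mathlib

open Complex Matrix

noncomputable section

def W₁ : Matrix (Fin 3) (Fin 3) ℂ :=
  !![1, 0, -Complex.I;
     -1 - Complex.I, 1, -1 + Complex.I;
     -1 - Complex.I, 1 - Complex.I, Complex.I]

def W₂ : Matrix (Fin 3) (Fin 3) ℂ :=
  !![1, 1 - Complex.I, -1 + Complex.I;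
     -1 - Complex.I, -1, 1 - Complex.I;
     -1 + Complex.I, 1 + Complex.I, -1 - 2 * Complex.I]

def W₃ : Matrix (Fin 3) (Fin 3) ℂ :=
  !![Complex.I, 1 + Complex.I, -Complex.I;
     1 - Complex.I, -1 - 2 * Complex.I, 2 * Complex.I;
     -1 - Complex.I, -3 + Complex.I, 3 + 2 * Complex.I]

def W₄ : Matrix (Fin 3) (Fin 3) ℂ :=
  !![-Complex.I, 0, 0;
     -1 + Complex.I, -1, 0;
     -1 + Complex.I, -1 + Complex.I, -Complex.I]

/-- `M` is loxodromic: it has an eigenvalue of modulus different from one. -/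
def Loxodromic (M : Matrix (Fin 3) (Fin 3) ℂ) : Prop :=
  ∃ μ : ℂ, M.charpoly.IsRoot μ ∧ ‖μ‖ ≠ 1

/-!
The characteristic polynomial of `G₁` and `G₃` is
`t³ - (2+i)t² + (2-i)t - 1 = (t + i)(t² - (2+2i)t + i)`, and the quadratic factor has the roots
`(1+i)(2 ± √2)/2`, of moduli `√2 ± 1`. The fourth powers of `G₂` and `G₄` are computed directly:
both are the identity.
-/

theorem Matrix.eval_charpoly_fin_three {R : Type*} [CommRing R] (M : Matrix (Fin 3) (Fin 3) R)
    (t : R) :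
    M.charpoly.eval t = t ^ 3 - M.trace * t ^ 2 + (M 0 0 * M 1 1 - M 0 1 * M 1 0 + M 0 0 * M 2 2
      - M 0 2 * M 2 0 + M 1 1 * M 2 2 - M 1 2 * M 2 1) * t - M.det := by
  simp only [eval_charpoly, det_fin_three, trace_fin_three, sub_apply, scalar_apply, diagonal_apply,
    ↓reduceIte, Fin.reduceEq]
  ring

lemma cubic_eq_mul_quadratic (t : ℂ) :
    t ^ 3 - (2 + I) * t ^ 2 + (2 - I) * t - 1 = (t + I) * (t ^ 2 - (2 + 2 * I) * t + I) := by
  linear_combination (2 * t - 1) * I_sq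

lemma quadratic_eq_zero {s : ℝ} (hs : 2 * s ^ 2 - 4 * s + 1 = 0) :
    ((1 + I) * s) ^ 2 - (2 + 2 * I) * ((1 + I) * s) + I = 0 := by
  have hs' : (2 * s ^ 2 - 4 * s + 1 : ℂ) = 0 := by exact_mod_cast hs
  linear_combination I * hs' + ((s : ℂ) ^ 2 - 2 * s) * I_sq

lemma loxodromic_of_eval_charpoly {M : Matrix (Fin 3) (Fin 3) ℂ}
    (hM : ∀ t, M.charpoly.eval t = t ^ 3 - (2 + I) * t ^ 2 + (2 - I) * t - 1) :
    Loxodromic M := by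
  set s : ℝ := 1 + √2 / 2
  have hsqrt : √2 ^ 2 = 2 := Real.sq_sqrt zero_le_two
  have hs : 2 * s ^ 2 - 4 * s + 1 = 0 := by linear_combination hsqrt / 2
  have hs_pos : 0 < s := by positivity
  have hnorm : ‖(1 + I) * s‖ = √2 * s := by
    rw [norm_mul, Complex.norm_real, Real.norm_eq_abs, abs_of_pos hs_pos, Complex.norm_def,
      Complex.normSq_apply]
    norm_num
  refine ⟨(1 + I) * s, ?_, ?_⟩
  · rw [Polynomial.IsRoot, hM, cubic_eq_mul_quadratic, quadratic_eq_zero hs, mul_zero]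
  · rw [hnorm]
    nlinarith [Real.sqrt_nonneg 2]

lemma eval_charpoly_W₁ (t : ℂ) :
    W₁.charpoly.eval t = t ^ 3 - (2 + I) * t ^ 2 + (2 - I) * t - 1 := by
  rw [eval_charpoly_fin_three]
  simp only [W₁, trace_fin_three, det_fin_three, of_apply, cons_val', cons_val_zero, cons_val_one,
    cons_val, cons_val_fin_one]
  linear_combination I * I_sq

lemma eval_charpoly_W₃ (t : ℂ) :
    W₃.charpoly.eval t = t ^ 3 - (2 + I) * t ^ 2 + (2 - I) * t - 1 := by
  rw [eval_charpoly_fin_three]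
  simp only [W₃, trace_fin_three, det_fin_three, of_apply, cons_val', cons_val_zero, cons_val_one,
    cons_val, cons_val_fin_one]
  linear_combination (4 - 6 * t + 3 * I) * I_sq

lemma W₂_pow_four : W₂ ^ 4 = 1 := by
  simp only [W₂, pow_succ, pow_zero, one_mul, mul_fin_three, one_fin_three]
  ring_nf
  simp only [I_sq, I_pow_three, I_pow_four]
  ring_nf

lemma W₄_pow_four : W₄ ^ 4 = 1 := by
  simp only [W₄, pow_succ, pow_zero, one_mul, mul_fin_three, one_fin_three]
  ring_nf
  simp only [I_pow_four]
  ring_nf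

/-- `G₁` and `G₃` have trace `2+i` and are loxodromic; `G₂` and `G₄` have trace
`-1-2i` and their fourth powers are scalar matrices (order four in `PU(2,1)`). -/
theorem whitehead_generators_types :
    (W₁.trace = 2 + Complex.I ∧ Loxodromic W₁) ∧
    (W₃.trace = 2 + Complex.I ∧ Loxodromic W₃) ∧
    (W₂.trace = -1 - 2 * Complex.I ∧ ∃ c : ℂ, W₂ ^ 4 = c • (1 : Matrix (Fin 3) (Fin 3) ℂ)) ∧
    (W₄.trace = -1 - 2 * Complex.I ∧ ∃ c : ℂ, W₄ ^ 4 = c • (1 : Matrix (Fin 3) (Fin 3) ℂ)) := by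
  refine ⟨⟨?_, loxodromic_of_eval_charpoly eval_charpoly_W₁⟩,
    ⟨?_, loxodromic_of_eval_charpoly eval_charpoly_W₃⟩,
    ⟨?_, 1, by rw [W₂_pow_four, one_smul]⟩, ⟨?_, 1, by rw [W₄_pow_four, one_smul]⟩⟩
  all_goals
    simp only [W₁, W₂, W₃, W₄, trace_fin_three_of]
    ring

end
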